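/- arXiv:2009.11146 — 2 statements merged into one kernel-verified Lean document; each statement's English description precedes it below -/
import Mathlib

section
/- If W₁, …, W_{τH} is any sequence of τH matrices all belonging to 𝔽, then the product W_{τH} W_{τH−1} ⋯ W₁ has at least one column all of whose entries are at least μ₀^{τH}. -/
/-!
Since `𝔽` has at most `H` elements, by pigeonhole some `Y ∈ 𝔽` occurs at least `τ` times among
the `τH` factors. The diagonals are positive, so deleting factors from a product of nonnegative
matrices can only shrink its set of positive entries; hence the positive column of `Y ^ τ` stays
positive in the full product. Finally, a positive entry of a product of `k` factors is a sum
containing a product of `k` positive entries, each at least `μ₀`.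
-/

theorem List.exists_lt_count_of_card_mul_lt_length {α : Type*} [DecidableEq α] {l : List α}
    {s : Finset α} {n : ℕ} (hl : ∀ a ∈ l, a ∈ s) (h : s.card * n < l.length) :
    ∃ a ∈ s, n < l.count a := by
  by_contra! hcount
  have : l.length ≤ s.card * n :=
    calc l.length = ∑ a ∈ l.toFinset, l.count a := (l.sum_toFinset_count_eq_length).symm
      _ ≤ ∑ a ∈ s, l.count a :=
          Finset.sum_le_sum_of_subset fun a ha => hl a (List.mem_toFinset.mp ha)
      _ ≤ s.card * n := Finset.sum_le_card_nsmul _ _ _ hcount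
  omega

namespace Matrix

variable {n R : Type*} [Fintype n] [Semiring R] [LinearOrder R] [IsStrictOrderedRing R]

theorem mul_apply_pos_iff {A B : Matrix n n R} (hA : ∀ i j, 0 ≤ A i j) (hB : ∀ i j, 0 ≤ B i j)
    (i j : n) : 0 < (A * B) i j ↔ ∃ k, 0 < A i k ∧ 0 < B k j := by
  rw [mul_apply, Finset.sum_pos_iff_of_nonneg fun k _ => mul_nonneg (hA i k) (hB k j)]
  constructor
  · rintro ⟨k, -, hk⟩
    exact ⟨k, pos_of_mul_pos_left hk (hB k j), pos_of_mul_pos_right hk (hA i k)⟩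
  · rintro ⟨k, hAk, hBk⟩
    exact ⟨k, Finset.mem_univ k, mul_pos hAk hBk⟩

variable [DecidableEq n]

theorem list_prod_apply_nonneg {L : List (Matrix n n R)} (hL : ∀ A ∈ L, ∀ i j, 0 ≤ A i j)
    (i j : n) : 0 ≤ L.prod i j := by
  induction L generalizing i j with
  | nil => by_cases hij : i = j <;> simp [hij]
  | cons A L ih =>
    rw [List.prod_cons, mul_apply]
    exact Finset.sum_nonneg fun k _ =>
      mul_nonneg (hL A List.mem_cons_self i k) (ih (fun B hB => hL B (.tail _ hB)) k j)

theorem list_prod_apply_pos_of_sublist {l₁ l₂ : List (Matrix n n R)} (hs : l₁.Sublist l₂)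
    (hl₂ : ∀ A ∈ l₂, (∀ i j, 0 ≤ A i j) ∧ ∀ i, 0 < A i i) {i j : n} (h : 0 < l₁.prod i j) :
    0 < l₂.prod i j := by
  induction hs generalizing i j with
  | slnil => exact h
  | @cons l₁ l₂ A hs ih =>
    have hl₂' := fun B hB => hl₂ B (.tail _ hB)
    obtain ⟨hA, hAdiag⟩ := hl₂ A List.mem_cons_self
    rw [List.prod_cons, mul_apply_pos_iff hA (list_prod_apply_nonneg fun B hB => (hl₂' B hB).1)]
    exact ⟨i, hAdiag i, ih hl₂' h⟩
  | @cons_cons l₁ l₂ A hs ih =>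
    have hl₂' := fun B hB => hl₂ B (.tail _ hB)
    have hA := (hl₂ A List.mem_cons_self).1
    have hnonneg₂ := list_prod_apply_nonneg fun B hB => (hl₂' B hB).1
    have hnonneg₁ := list_prod_apply_nonneg fun B hB => (hl₂' B (hs.subset hB)).1
    rw [List.prod_cons, mul_apply_pos_iff hA hnonneg₁] at h
    rw [List.prod_cons, mul_apply_pos_iff hA hnonneg₂]
    obtain ⟨k, hAk, hk⟩ := h
    exact ⟨k, hAk, ih hl₂' hk⟩

theorem pow_length_le_list_prod_apply {μ : R} (hμ : 0 ≤ μ) {L : List (Matrix n n R)}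
    (hL : ∀ A ∈ L, (∀ i j, 0 ≤ A i j) ∧ ∀ i j, 0 < A i j → μ ≤ A i j) {i j : n}
    (h : 0 < L.prod i j) : μ ^ L.length ≤ L.prod i j := by
  induction L generalizing i j with
  | nil => by_cases hij : i = j <;> simp_all
  | cons A L ih =>
    have hL' := fun B hB => hL B (.tail _ hB)
    obtain ⟨hA, hAμ⟩ := hL A List.mem_cons_self
    have hnonneg := list_prod_apply_nonneg fun B hB => (hL' B hB).1
    rw [List.prod_cons] at h ⊢
    obtain ⟨k, hAk, hk⟩ := (mul_apply_pos_iff hA hnonneg i j).mp h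
    calc μ ^ (A :: L).length = μ * μ ^ L.length := pow_succ' μ _
      _ ≤ A i k * L.prod k j := mul_le_mul (hAμ i k hAk) (ih hL' hk) (pow_nonneg hμ _) hAk.le
      _ ≤ (A * L.prod) i j :=
          Finset.single_le_sum (fun l _ => mul_nonneg (hA i l) (hnonneg l j)) (Finset.mem_univ k)

end Matrix

theorem product_column_lower_bound_general
    (N τ Hc : ℕ) (hτ : 1 ≤ τ) (hH : 1 ≤ Hc)
    (μ₀ : ℝ) (hμ₀0 : 0 < μ₀)
    (𝔽 : Finset (Matrix (Fin N) (Fin N) ℝ)) (hcard : 𝔽.card ≤ Hc)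
    (h𝔽 : ∀ Y ∈ 𝔽, (∀ i j, 0 ≤ Y i j) ∧ (∀ i, μ₀ ≤ Y i i) ∧
      (∀ i j, Y i j ≠ 0 → μ₀ ≤ Y i j) ∧ (∃ j, ∀ i, (Y ^ τ) i j ≠ 0))
    (W : Fin (τ * Hc) → Matrix (Fin N) (Fin N) ℝ) (hW : ∀ i, W i ∈ 𝔽) :
    ∃ j, ∀ i, μ₀ ^ (τ * Hc) ≤ (List.ofFn W).reverse.prod i j := by
  classical
  set L := (List.ofFn W).reverse with hL
  have hlen : L.length = τ * Hc := by simp [hL]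
  have hmem : ∀ A ∈ L, A ∈ 𝔽 := by simpa [hL, List.mem_ofFn] using hW
  obtain ⟨Y, hY, hcount⟩ : ∃ Y ∈ 𝔽, τ - 1 < L.count Y :=
    L.exists_lt_count_of_card_mul_lt_length hmem (by rw [hlen]; nlinarith [Nat.sub_lt hτ one_pos])
  have hL𝔽 := fun A (hA : A ∈ L) => h𝔽 A (hmem A hA)
  obtain ⟨hYnonneg, -, -, j, hj⟩ := h𝔽 Y hY
  refine ⟨j, fun i => ?_⟩
  have hYpow : 0 < (List.replicate τ Y).prod i j := by
    rw [List.prod_replicate]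
    exact (Matrix.pow_apply_nonneg hYnonneg τ i j).lt_of_ne' (hj i)
  have hpos : 0 < L.prod i j :=
    Matrix.list_prod_apply_pos_of_sublist (List.replicate_sublist_iff.mpr (by omega))
      (fun A hA => ⟨(hL𝔽 A hA).1, fun i => hμ₀0.trans_le ((hL𝔽 A hA).2.1 i)⟩)
      hYpow
  rw [← hlen]
  exact Matrix.pow_length_le_list_prod_apply hμ₀0.le
    (fun A hA => ⟨(hL𝔽 A hA).1, fun i j h => (hL𝔽 A hA).2.2.1 i j h.ne'⟩) hpos

/-- any product `W_{τH} ⋯ W_1` of `τH` matrices from the family `𝔽`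
has at least one column all of whose entries are at least `μ₀^{τH}`. -/
theorem product_column_lower_bound
    (N τ Hc : ℕ) (hN : 1 ≤ N) (hτ : 1 ≤ τ) (hH : 1 ≤ Hc)
    (μ₀ : ℝ) (hμ₀0 : 0 < μ₀) (hμ₀1 : μ₀ ≤ 1)
    (𝔽 : Finset (Matrix (Fin N) (Fin N) ℝ)) (hcard : 𝔽.card ≤ Hc)
    (h𝔽 : ∀ Y ∈ 𝔽, (∀ i j, 0 ≤ Y i j) ∧ (∀ i, μ₀ ≤ Y i i) ∧
      (∀ i j, Y i j ≠ 0 → μ₀ ≤ Y i j) ∧ (∃ j, ∀ i, (Y ^ τ) i j ≠ 0))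
    (W : Fin (τ * Hc) → Matrix (Fin N) (Fin N) ℝ) (hW : ∀ i, W i ∈ 𝔽) :
    ∃ j, ∀ i, μ₀ ^ (τ * Hc) ≤ (List.ofFn W).reverse.prod i j :=
  product_column_lower_bound_general N τ Hc hτ hH μ₀ hμ₀0 𝔽 hcard h𝔽 W hW
end

section
/- For all reals η > 0 and 1 < ε < 2 and all integers k⁰ ≥ 2 with (k⁰−1)/η ≥ e^{1/(2−ε)}, and every integer k ≥ 0: Σ_{i=0}^k ((i+k⁰)/η)^{ε−2} ln((i+k⁰)/η) ≤ (η/(ε−1)²) ((ε−1) ln((k+k⁰)/η) + 1) ((k+k⁰)/η)^{ε−1}. -/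
/-!
Once `log t ≥ 1 / (2 - ε)`, the function `t ↦ t ^ (ε - 2) * log t` is decreasing, so the sum is
bounded by the integral of `x ↦ (x / η) ^ (ε - 2) * log (x / η)` over `[k₀ - 1, k + k₀]`.
Substituting `t = x / η`, this is `η` times an integral of `t ^ (p - 1) * log t` with `p = ε - 1`,
whose antiderivative is `(p * t ^ p * log t - t ^ p) / p ^ 2`. The contribution of the lower
endpoint `s = (k₀ - 1) / η ≥ 1` is at most `s ^ p / p ^ 2 ≤ ((k + k₀) / η) ^ p / p ^ 2`.
-/

open Real Set

lemma hasDerivAt_rpow_mul_log {r t : ℝ} (ht : 0 < t) :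
    HasDerivAt (fun t ↦ t ^ r * log t) (t ^ (r - 1) * (r * log t + 1)) t := by
  refine ((hasDerivAt_rpow_const (Or.inl ht.ne')).mul (hasDerivAt_log ht.ne')).congr_deriv ?_
  rw [rpow_sub_one ht.ne']
  field_simp

lemma antitoneOn_rpow_mul_log {r : ℝ} (hr : r < 0) :
    AntitoneOn (fun t ↦ t ^ r * log t) (Ici (exp (-r⁻¹))) := by
  have hpos : ∀ t ∈ Ici (exp (-r⁻¹)), 0 < t := fun t ht ↦ (exp_pos _).trans_le ht
  refine antitoneOn_of_deriv_nonpos (convex_Ici _)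
    (fun t ht ↦ (hasDerivAt_rpow_mul_log (hpos t ht)).continuousAt.continuousWithinAt)
    (fun t ht ↦ (hasDerivAt_rpow_mul_log (hpos t (interior_subset ht))).differentiableAt
      |>.differentiableWithinAt) fun t ht ↦ ?_
  rw [interior_Ici] at ht
  have ht0 : 0 < t := (exp_pos _).trans ht
  rw [(hasDerivAt_rpow_mul_log ht0).deriv]
  have hlog : -r⁻¹ ≤ log t := (le_log_iff_exp_le ht0).2 ht.le
  have hfactor : r * log t + 1 ≤ 0 := by
    have hmul := mul_le_mul_of_nonpos_left hlog hr.le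
    rw [mul_neg, mul_inv_cancel₀ hr.ne] at hmul
    linarith
  exact mul_nonpos_of_nonneg_of_nonpos (rpow_nonneg ht0.le _) hfactor

lemma hasDerivAt_rpow_mul_log_antideriv {p t : ℝ} (hp : p ≠ 0) (ht : 0 < t) :
    HasDerivAt (fun t ↦ (p * (t ^ p * log t) - t ^ p) / p ^ 2) (t ^ (p - 1) * log t) t := by
  refine ((((hasDerivAt_rpow_mul_log ht).const_mul p).sub
    (hasDerivAt_rpow_const (Or.inl ht.ne'))).div_const (p ^ 2)).congr_deriv ?_
  field_simp
  ring

lemma integral_rpow_sub_one_mul_log {p a b : ℝ} (hp : p ≠ 0) (ha : 0 < a) (hb : 0 < b) :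
    ∫ t in a..b, t ^ (p - 1) * log t =
      (p * (b ^ p * log b) - b ^ p) / p ^ 2 - (p * (a ^ p * log a) - a ^ p) / p ^ 2 := by
  have hpos : ∀ t ∈ uIcc a b, 0 < t := fun t ht ↦ (lt_min ha hb).trans_le ht.1
  refine intervalIntegral.integral_eq_sub_of_hasDerivAt
    (fun t ht ↦ hasDerivAt_rpow_mul_log_antideriv hp (hpos t ht)) ?_
  refine ContinuousOn.intervalIntegrable fun t ht ↦ ?_
  exact ((continuousAt_id.rpow_const (Or.inl (hpos t ht).ne')).mul
    (continuousAt_log (hpos t ht).ne')).continuousWithinAt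

lemma rpow_mul_log_antideriv_sub_le {p s T : ℝ} (hp : 0 < p) (hs : 1 ≤ s) (hsT : s ≤ T) :
    (p * (T ^ p * log T) - T ^ p) / p ^ 2 - (p * (s ^ p * log s) - s ^ p) / p ^ 2 ≤
      (p * log T + 1) * T ^ p / p ^ 2 := by
  have hpow : s ^ p ≤ T ^ p := rpow_le_rpow (by linarith) hsT hp.le
  have hlog : 0 ≤ p * (s ^ p * log s) :=
    mul_nonneg hp.le (mul_nonneg (rpow_nonneg (by linarith) _) (log_nonneg hs))
  rw [← sub_div]
  gcongr
  nlinarith [rpow_nonneg (zero_le_one.trans (hs.trans hsT)) p]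

theorem log_sum_bound_eps_between_one_two_general
    (η ε : ℝ) (hη : 0 < η) (hε1 : 1 < ε) (hε2 : ε < 2) (k₀ k : ℕ)
    (hk₀' : Real.exp (1 / (2 - ε)) ≤ ((k₀ : ℝ) - 1) / η) :
    ∑ i ∈ Finset.range (k + 1),
        (((i : ℝ) + k₀) / η) ^ (ε - 2) * Real.log (((i : ℝ) + k₀) / η)
      ≤ η / (ε - 1) ^ 2 * ((ε - 1) * Real.log (((k : ℝ) + k₀) / η) + 1)
        * (((k : ℝ) + k₀) / η) ^ (ε - 1) := by
  set g : ℝ → ℝ := fun t ↦ t ^ (ε - 2) * log t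
  have hthreshold : exp (-(ε - 2)⁻¹) ≤ ((k₀ : ℝ) - 1) / η := by
    rwa [← inv_neg, neg_sub, ← one_div]
  have hanti : AntitoneOn (fun x ↦ g (x / η))
      (Icc ((k₀ : ℝ) - 1) ((k₀ : ℝ) - 1 + (k + 1 : ℕ))) :=
    fun x hx y hy hxy ↦ antitoneOn_rpow_mul_log (by linarith)
      (hthreshold.trans (by gcongr; exact hx.1)) (hthreshold.trans (by gcongr; exact hy.1))
      (by gcongr)
  have hs : 1 ≤ ((k₀ : ℝ) - 1) / η := (one_le_exp (one_div_nonneg.2 (by linarith))).trans hk₀'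
  have hsT : ((k₀ : ℝ) - 1) / η ≤ ((k : ℝ) + k₀) / η := by gcongr; linarith [k.cast_nonneg (α := ℝ)]
  calc ∑ i ∈ Finset.range (k + 1), g (((i : ℝ) + k₀) / η)
      = ∑ i ∈ Finset.range (k + 1), g (((k₀ : ℝ) - 1 + (i + 1 : ℕ)) / η) := by
        congr! 3; push_cast; ring
    _ ≤ ∫ x in (k₀ : ℝ) - 1..(k₀ : ℝ) - 1 + (k + 1 : ℕ), g (x / η) := hanti.sum_le_integral
    _ = η * ∫ t in ((k₀ : ℝ) - 1) / η..((k : ℝ) + k₀) / η, t ^ (ε - 1 - 1) * log t := by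
        rw [intervalIntegral.integral_comp_div _ hη.ne', smul_eq_mul, sub_sub, one_add_one_eq_two]
        congr 3; push_cast; ring
    _ ≤ η * (((ε - 1) * log (((k : ℝ) + k₀) / η) + 1) * (((k : ℝ) + k₀) / η) ^ (ε - 1)
          / (ε - 1) ^ 2) := by
        rw [integral_rpow_sub_one_mul_log (by linarith) (by linarith) (by linarith)]
        gcongr
        exact rpow_mul_log_antideriv_sub_le (by linarith) hs hsT
    _ = _ := by ring

/-- for `η > 0`, `1 < ε < 2`, integers `k⁰ ≥ 2` with
`(k⁰-1)/η ≥ e^{1/(2-ε)}`, and every integer `k ≥ 0`,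
`∑_{i=0}^k ((i+k⁰)/η)^{ε-2} ln((i+k⁰)/η)
   ≤ (η/(ε-1)²)((ε-1) ln((k+k⁰)/η) + 1)((k+k⁰)/η)^{ε-1}`. -/
theorem log_sum_bound_eps_between_one_two
    (η ε : ℝ) (hη : 0 < η) (hε1 : 1 < ε) (hε2 : ε < 2) (k₀ k : ℕ) (hk₀ : 2 ≤ k₀)
    (hk₀' : Real.exp (1 / (2 - ε)) ≤ ((k₀ : ℝ) - 1) / η) :
    ∑ i ∈ Finset.range (k + 1),
        (((i : ℝ) + k₀) / η) ^ (ε - 2) * Real.log (((i : ℝ) + k₀) / η)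
      ≤ η / (ε - 1) ^ 2 * ((ε - 1) * Real.log (((k : ℝ) + k₀) / η) + 1)
        * (((k : ℝ) + k₀) / η) ^ (ε - 1) :=
  log_sum_bound_eps_between_one_two_general η ε hη hε1 hε2 k₀ k hk₀'
end
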